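/- Let G be a connected simple graph on a finite vertex set V with a nonempty clique core C ⊆ V, and define the layer of a vertex v as k(v) = min_{c ∈ C} dist(v, c). Let S = {v ∈ V : k(v) ≤ 2} and suppose |S| ≥ p · |V| for a real number p with 0 ≤ p ≤ 1. Then the number of ordered pairs (u, w) of vertices with dist(u, w) ≤ 5 is at least p² · |V|², i.e., at least a p² fraction of all ordered vertex pairs are within distance 5 of each other. -/
import Mathlib

lemma ncard_prod_aux {α β : Type*} (s : Set α) (t : Set β) :
    (s ×ˢ t).ncard = s.ncard * t.ncard := by
  rw [← Nat.card_coe_set_eq, ← Nat.card_coe_set_eq, ← Nat.card_coe_set_eq,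
    Nat.card_congr (Equiv.Set.prod s t), Nat.card_prod]

/-- In a connected finite simple graph `G` with a nonempty clique core `C`,
if the set `S` of vertices of layer at most 2 satisfies `|S| ≥ p * |V|` for some real
`0 ≤ p ≤ 1`, then at least a `p²` fraction of all ordered vertex pairs are within
distance 5 of each other. -/
theorem jellyfish_effective_diameter_five
    {V : Type*} [Fintype V] (G : SimpleGraph V) (hG : G.Connected)
    (C : Finset V) (hC : C.Nonempty)
    (hclique : ∀ x ∈ C, ∀ y ∈ C, x ≠ y → G.Adj x y)
    (k : V → ℕ) (hk : ∀ v, k v = C.inf' hC fun c => G.dist v c)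
    (p : ℝ) (hp0 : 0 ≤ p) (hp1 : p ≤ 1)
    (hS : p * (Fintype.card V : ℝ) ≤ ({v : V | k v ≤ 2}.ncard : ℝ)) :
    p ^ 2 * (Fintype.card V : ℝ) ^ 2 ≤
      ({uw : V × V | G.dist uw.1 uw.2 ≤ 5}.ncard : ℝ) := by
  set S : Set V := {v | k v ≤ 2} with hSdef
  have key : ∀ u ∈ S, ∀ w ∈ S, G.dist u w ≤ 5 := by
    intro u hu w hw
    obtain ⟨cu, hcu, hdu⟩ := Finset.exists_mem_eq_inf' hC (fun c => G.dist u c)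
    obtain ⟨cw, hcw, hdw⟩ := Finset.exists_mem_eq_inf' hC (fun c => G.dist w c)
    have h1 : G.dist u cu ≤ 2 := by
      have := hu; simp only [hSdef, Set.mem_setOf_eq, hk u, hdu] at this; exact this
    have h2 : G.dist w cw ≤ 2 := by
      have := hw; simp only [hSdef, Set.mem_setOf_eq, hk w, hdw] at this; exact this
    have h3 : G.dist cu cw ≤ 1 := by
      rcases eq_or_ne cu cw with h | h
      · simp [h, SimpleGraph.dist_self]
      · have hadj := hclique cu hcu cw hcw h
        calc G.dist cu cw ≤ (hadj.toWalk).length := SimpleGraph.dist_le _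
          _ = 1 := rfl
    calc G.dist u w ≤ G.dist u cu + G.dist cu w := hG.dist_triangle
      _ ≤ G.dist u cu + (G.dist cu cw + G.dist cw w) :=
        Nat.add_le_add_left hG.dist_triangle _
      _ = G.dist u cu + (G.dist cu cw + G.dist w cw) := by rw [SimpleGraph.dist_comm (u := w) (v := cw)]
      _ ≤ 2 + (1 + 2) := by omega
      _ = 5 := rfl
  have hsub : S ×ˢ S ⊆ {uw : V × V | G.dist uw.1 uw.2 ≤ 5} := by
    rintro ⟨u, w⟩ ⟨hu, hw⟩
    exact key u hu w hw
  have hcard : S.ncard * S.ncard ≤ ({uw : V × V | G.dist uw.1 uw.2 ≤ 5}).ncard := by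
    have := Set.ncard_le_ncard hsub (Set.toFinite _)
    rwa [ncard_prod_aux] at this
  have h0 : (0:ℝ) ≤ p * (Fintype.card V : ℝ) := mul_nonneg hp0 (Nat.cast_nonneg _)
  calc p ^ 2 * (Fintype.card V : ℝ) ^ 2 = (p * (Fintype.card V : ℝ)) ^ 2 := by ring
    _ ≤ (S.ncard : ℝ) ^ 2 := pow_le_pow_left₀ h0 hS 2
    _ = ((S.ncard * S.ncard : ℕ) : ℝ) := by push_cast; ring
    _ ≤ _ := Nat.cast_le.mpr hcard
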